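/- arXiv:2405.15957 — 8 statements merged into one kernel-verified Lean document; each statement's English description precedes it below -/
import Mathlib

section
/- Let I ⊆ ℝ be a nontrivial open interval and let x, θ : I → ℝ be twice differentiable functions such that for every s ∈ I and every real t > 0 one has t²·(x'(s)·θ''(s) − θ'(s)·x''(s) + 2·θ'(s)³) + 2·x'(s)·θ'(s)²·t + x'(s)²·θ'(s) = 0. Then θ is constant on I. -/
/-!
Comparing coefficients of the polynomial identity in `t` gives `x'²θ' = 0` and
`x'θ'' - θ'x'' + 2θ'³ = 0`. Where `θ' ≠ 0`, which by continuity of `θ'` is an open condition,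
the first equation forces `x' ≡ 0` nearby, hence also `x'' = 0`, and then the second one reads
`2θ'³ = 0`. So `θ' ≡ 0` on the interval and `θ` is constant.
-/

open Filter Topology Set

theorem eq_zero_of_forall_pos_quadratic_eq_zero {K : Type*} [Field K] [LinearOrder K]
    [IsStrictOrderedRing K] {A B C : K} (h : ∀ t : K, 0 < t → t ^ 2 * A + B * t + C = 0) :
    A = 0 ∧ B = 0 ∧ C = 0 := by
  have h1 := h 1 one_pos
  have h2 := h 2 two_pos
  have h3 := h 3 three_pos
  norm_num at h1 h2 h3
  refine ⟨by linarith, by linarith, by linarith⟩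

theorem eq_zero_of_sq_mul_eventually_eq_zero {u v : ℝ → ℝ} {s : ℝ} (hv : ContinuousAt v s)
    (hC : ∀ᶠ y in 𝓝 s, u y ^ 2 * v y = 0)
    (hA : u s * deriv v s - v s * deriv u s + 2 * v s ^ 3 = 0) : v s = 0 := by
  by_contra hne
  have hu : u =ᶠ[𝓝 s] fun _ ↦ 0 := by
    filter_upwards [hC, hv.eventually_ne hne] with y hy hvy
    simpa [hvy] using hy
  have hu_s : u s = 0 := hu.eq_of_nhds
  have hu'_s : deriv u s = 0 := by rw [hu.deriv_eq, deriv_const]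
  rw [hu_s, hu'_s] at hA
  exact hne (pow_eq_zero_iff three_ne_zero |>.1 (by linarith))

theorem stmt_1_general (a b : ℝ) (x θ : ℝ → ℝ)
    (hθ : ∀ s ∈ Set.Ioo a b, DifferentiableAt ℝ θ s)
    (hθ' : ∀ s ∈ Set.Ioo a b, DifferentiableAt ℝ (deriv θ) s)
    (heq : ∀ s ∈ Set.Ioo a b, ∀ t : ℝ, 0 < t →
      t ^ 2 * (deriv x s * deriv (deriv θ) s - deriv θ s * deriv (deriv x) s
          + 2 * (deriv θ s) ^ 3)
        + 2 * deriv x s * (deriv θ s) ^ 2 * t + (deriv x s) ^ 2 * deriv θ s = 0) :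
    ∀ s ∈ Set.Ioo a b, ∀ s' ∈ Set.Ioo a b, θ s = θ s' := by
  have hcoeffs := fun s hs ↦ eq_zero_of_forall_pos_quadratic_eq_zero (heq s hs)
  have hθ'_zero : (Ioo a b).EqOn (deriv θ) 0 := fun s hs ↦
    eq_zero_of_sq_mul_eventually_eq_zero (hθ' s hs).continuousAt
      (eventually_of_mem (isOpen_Ioo.mem_nhds hs) fun y hy ↦ (hcoeffs y hy).2.2)
      (hcoeffs s hs).1
  intro s hs s' hs'
  exact isOpen_Ioo.is_const_of_deriv_eq_zero isPreconnected_Ioo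
    (fun y hy ↦ (hθ y hy).differentiableWithinAt) hθ'_zero hs hs'

/-- classification of 𝒜-invariant ∂ₓ-translators: the polynomial
identity in `t > 0` forces `θ` to be constant on the interval. -/
theorem stmt_1 (a b : ℝ) (hab : a < b) (x θ : ℝ → ℝ)
    (hx : ∀ s ∈ Set.Ioo a b, DifferentiableAt ℝ x s)
    (hx' : ∀ s ∈ Set.Ioo a b, DifferentiableAt ℝ (deriv x) s)
    (hθ : ∀ s ∈ Set.Ioo a b, DifferentiableAt ℝ θ s)
    (hθ' : ∀ s ∈ Set.Ioo a b, DifferentiableAt ℝ (deriv θ) s)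
    (heq : ∀ s ∈ Set.Ioo a b, ∀ t : ℝ, 0 < t →
      t ^ 2 * (deriv x s * deriv (deriv θ) s - deriv θ s * deriv (deriv x) s
          + 2 * (deriv θ s) ^ 3)
        + 2 * deriv x s * (deriv θ s) ^ 2 * t + (deriv x s) ^ 2 * deriv θ s = 0) :
    ∀ s ∈ Set.Ioo a b, ∀ s' ∈ Set.Ioo a b, θ s = θ s' :=
  stmt_1_general a b x θ hθ hθ' heq
end

section
/- The function φ(s) = arctan(√2) + 2·arctan(tanh(√3·s/2)) is, on all of ℝ, the unique differentiable solution of the ordinary differential equation φ'(s) = cos φ(s) + √2·sin φ(s) with initial condition φ(0) = arctan(√2). -/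
/-!
Writing `cos φ + √2 sin φ = √3 cos (φ - arctan √2)`, the shifted unknown `θ = φ - arctan √2`
satisfies `θ' = √3 cos θ`, which is solved by `θ(s) = gd (√3 s)` for the Gudermannian
`gd u = 2 arctan (tanh (u / 2))`, since `gd' = sech = cos ∘ gd`. Uniqueness holds because the
right-hand side is globally Lipschitz.
-/

open Real

theorem Real.hasDerivAt_tanh (x : ℝ) : HasDerivAt tanh (1 - tanh x ^ 2) x := by
  have hcosh : cosh x ≠ 0 := (cosh_pos x).ne'
  rw [show tanh = fun y => sinh y / cosh y from funext tanh_eq_sinh_div_cosh]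
  refine ((hasDerivAt_sinh x).div (hasDerivAt_cosh x) hcosh).congr_deriv ?_
  field_simp

theorem Real.cos_two_mul_arctan (t : ℝ) : cos (2 * arctan t) = (1 - t ^ 2) / (1 + t ^ 2) := by
  have : 1 + t ^ 2 ≠ 0 := by positivity
  rw [cos_two_mul, cos_sq_arctan]
  field_simp
  ring

theorem hasDerivAt_two_mul_arctan_tanh_half (u : ℝ) :
    HasDerivAt (fun u => 2 * arctan (tanh (u / 2))) (cos (2 * arctan (tanh (u / 2)))) u := by
  have h := (((hasDerivAt_tanh (u / 2)).comp u ((hasDerivAt_id u).div_const 2)).arctan).const_mul 2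
  simp only [Function.comp_def, id] at h
  refine h.congr_deriv ?_
  rw [cos_two_mul_arctan]
  have : 1 + tanh (u / 2) ^ 2 ≠ 0 := by positivity
  field_simp

theorem cos_add_sqrt_two_mul_sin (x : ℝ) :
    cos x + √2 * sin x = √3 * cos (x - arctan √2) := by
  have h3 : √(1 + √2 ^ 2) = √3 := by norm_num
  have : √3 ≠ 0 := by positivity
  rw [cos_sub, cos_arctan, sin_arctan, h3]
  field_simp

theorem lipschitzWith_cos_add_sqrt_two_mul_sin :
    LipschitzWith (1 + ‖√2‖₊ * 1) (fun x => cos x + √2 * sin x) :=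
  lipschitzWith_cos.add ((lipschitzWith_smul √2).comp lipschitzWith_sin)

theorem hasDerivAt_arctan_sqrt_two_add_two_mul_arctan_tanh (s : ℝ) :
    HasDerivAt (fun s => arctan √2 + 2 * arctan (tanh (√3 * s / 2)))
      (cos (arctan √2 + 2 * arctan (tanh (√3 * s / 2)))
        + √2 * sin (arctan √2 + 2 * arctan (tanh (√3 * s / 2)))) s := by
  have h := ((hasDerivAt_two_mul_arctan_tanh_half (√3 * s)).comp s
    ((hasDerivAt_id s).const_mul √3)).const_add (arctan √2)
  rw [cos_add_sqrt_two_mul_sin, add_sub_cancel_left]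
  simpa [mul_comm] using h

/-- `φ(s) = arctan √2 + 2 arctan(tanh(√3 s/2))` is, on all of `ℝ`,
the unique differentiable solution of `φ' = cos φ + √2 sin φ` with
`φ(0) = arctan √2`. -/
theorem stmt_4 (φ : ℝ → ℝ)
    (hφ : φ = fun s =>
      Real.arctan (Real.sqrt 2) + 2 * Real.arctan (Real.tanh (Real.sqrt 3 * s / 2))) :
    (∀ s : ℝ, HasDerivAt φ (Real.cos (φ s) + Real.sqrt 2 * Real.sin (φ s)) s) ∧
    φ 0 = Real.arctan (Real.sqrt 2) ∧
    (∀ ψ : ℝ → ℝ, (∀ s : ℝ, DifferentiableAt ℝ ψ s) →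
      (∀ s : ℝ, deriv ψ s = Real.cos (ψ s) + Real.sqrt 2 * Real.sin (ψ s)) →
      ψ 0 = Real.arctan (Real.sqrt 2) → ψ = φ) := by
  subst hφ
  have hφ' := hasDerivAt_arctan_sqrt_two_add_two_mul_arctan_tanh
  refine ⟨hφ', by simp, fun ψ hψ hψ' hψ0 => ?_⟩
  exact ODE_solution_unique_univ (v := fun _ x => cos x + √2 * sin x) (s := fun _ => Set.univ)
    (t₀ := 0) (fun _ => lipschitzWith_cos_add_sqrt_two_mul_sin.lipschitzOnWith)
    (fun s => ⟨hψ' s ▸ (hψ s).hasDerivAt, trivial⟩) (fun s => ⟨hφ' s, trivial⟩) (by simp [hψ0])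
end

section
/- Let I ⊆ ℝ be a nontrivial open interval and let y : I → ℝ be a twice differentiable function with y(s) > 0 for all s ∈ I, satisfying y'(s)² = 2·y(s)·(y''(s) + y(s)) for all s ∈ I. Then there exist constants c > 0 and s₀ ∈ ℝ such that y(s) = c·(1 + cos(√2·(s − s₀))) for all s ∈ I. -/
/-!
The substitution `u = √y` linearises the equation: `y'² = 2y(y'' + y)` becomes `u'' = -u/2`.
Hence `√y = R cos(s/√2 - φ)`, and `y = R²cos²(s/√2 - φ) = (R²/2)(1 + cos(√2 s - 2φ))`.
-/

open Real Set

theorem hasDerivAt_deriv_div_two_sqrt_of_ode {y : ℝ → ℝ} {s y'' : ℝ}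
    (hy : DifferentiableAt ℝ y s) (hy' : HasDerivAt (deriv y) y'' s) (hpos : 0 < y s)
    (hode : deriv y s ^ 2 = 2 * y s * (y'' + y s)) :
    HasDerivAt (fun t => deriv y t / (2 * √(y t))) (-(1 / 2 * √(y s))) s := by
  have hsq : √(y s) ^ 2 = y s := sq_sqrt hpos.le
  have : 0 < √(y s) := sqrt_pos.mpr hpos
  refine (hy'.div ((hy.hasDerivAt.sqrt hpos.ne').const_mul 2) (by positivity)).congr_deriv ?_
  field_simp
  linear_combination -hode + 2 * (y'' + √(y s) ^ 2 + y s) * hsq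

theorem exists_eq_cos_sin_of_hasDerivAt {S : Set ℝ} (hS : IsOpen S) (hS' : IsPreconnected S)
    {ω : ℝ} (hω : ω ≠ 0) {u v : ℝ → ℝ} (hu : ∀ s ∈ S, HasDerivAt u (v s) s)
    (hv : ∀ s ∈ S, HasDerivAt v (-(ω ^ 2 * u s)) s) :
    ∃ A B : ℝ, ∀ s ∈ S, u s = A * cos (ω * s) + B * sin (ω * s) := by
  have const (f : ℝ → ℝ) (hf : ∀ s ∈ S, HasDerivAt f 0 s) : ∃ c, ∀ s ∈ S, f s = c :=
    hS.exists_is_const_of_deriv_eq_zero hS'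
      (fun s hs => (hf s hs).differentiableAt.differentiableWithinAt) (fun s hs => (hf s hs).deriv)
  have hlin : ∀ s, HasDerivAt (fun t => ω * t) ω s := fun s => by
    simpa using (hasDerivAt_id s).const_mul ω
  -- `(u, v/ω)` rotated back by the angle `ω s` is a conserved vector.
  obtain ⟨A, hA⟩ := const (fun t => u t * cos (ω * t) - v t / ω * sin (ω * t)) fun s hs => by
    refine (((hu s hs).mul (hlin s).cos).sub
      (((hv s hs).div_const ω).mul (hlin s).sin)).congr_deriv ?_
    field_simp
    ring
  obtain ⟨B, hB⟩ := const (fun t => u t * sin (ω * t) + v t / ω * cos (ω * t)) fun s hs => by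
    refine (((hu s hs).mul (hlin s).sin).add
      (((hv s hs).div_const ω).mul (hlin s).cos)).congr_deriv ?_
    field_simp
    ring
  refine ⟨A, B, fun s hs => ?_⟩
  linear_combination
    cos (ω * s) * hA s hs + sin (ω * s) * hB s hs - u s * sin_sq_add_cos_sq (ω * s)

theorem exists_mul_cos_sub_eq (A B : ℝ) :
    ∃ R φ : ℝ, ∀ t, A * cos t + B * sin t = R * cos (t - φ) := by
  let z : ℂ := ⟨A, B⟩
  refine ⟨‖z‖, z.arg, fun t => ?_⟩
  rw [cos_sub]
  linear_combination (-cos t) * Complex.norm_mul_cos_arg z - sin t * Complex.norm_mul_sin_arg z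

/-- a positive twice differentiable solution of
`y'² = 2 y (y'' + y)` on a nontrivial open interval is of the form
`y(s) = c (1 + cos(√2 (s - s₀)))` with `c > 0`. -/
theorem stmt_8 (a b : ℝ) (hab : a < b) (y : ℝ → ℝ)
    (hpos : ∀ s ∈ Set.Ioo a b, 0 < y s)
    (hy : ∀ s ∈ Set.Ioo a b, DifferentiableAt ℝ y s)
    (hy' : ∀ s ∈ Set.Ioo a b, DifferentiableAt ℝ (deriv y) s)
    (hode : ∀ s ∈ Set.Ioo a b,
      (deriv y s) ^ 2 = 2 * y s * (deriv (deriv y) s + y s)) :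
    ∃ c s₀ : ℝ, 0 < c ∧ ∀ s ∈ Set.Ioo a b,
      y s = c * (1 + Real.cos (Real.sqrt 2 * (s - s₀))) := by
  have hsqrt2 : √2 ^ 2 = 2 := sq_sqrt zero_le_two
  have hω : (√2 / 2) ^ 2 = 1 / 2 := by rw [div_pow, hsqrt2]; norm_num
  obtain ⟨A, B, hAB⟩ := exists_eq_cos_sin_of_hasDerivAt isOpen_Ioo isPreconnected_Ioo
    (ω := √2 / 2) (by positivity) (fun s hs => (hy s hs).hasDerivAt.sqrt (hpos s hs).ne')
    fun s hs => hω ▸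
      hasDerivAt_deriv_div_two_sqrt_of_ode (hy s hs) (hy' s hs).hasDerivAt (hpos s hs) (hode s hs)
  obtain ⟨R, φ, hRφ⟩ := exists_mul_cos_sub_eq A B
  have hu : ∀ s ∈ Ioo a b, √(y s) = R * cos (√2 / 2 * s - φ) := fun s hs =>
    (hAB s hs).trans (hRφ _)
  have hR : R ≠ 0 := by
    have hm : (a + b) / 2 ∈ Ioo a b := ⟨by linarith, by linarith⟩
    have := sqrt_pos.mpr (hpos _ hm)
    rintro rfl
    simp [hu _ hm] at this
  refine ⟨R ^ 2 / 2, √2 * φ, by positivity, fun s hs => ?_⟩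
  have harg : √2 * (s - √2 * φ) = 2 * (√2 / 2 * s - φ) := by
    linear_combination (-φ) * hsqrt2
  rw [← sq_sqrt (hpos s hs).le, hu s hs, harg, cos_two_mul]
  ring
end

section
/- Let I ⊆ ℝ be a nontrivial open interval and let x, θ : I → ℝ be twice differentiable functions with θ'(s) ≠ 0 for all s ∈ I, such that for every s ∈ I and every real t > 0 one has t²·(x'(s)·θ''(s) − θ'(s)·x''(s) + 2·x(s)·θ'(s)³) + 2·x(s)·x'(s)·θ'(s)²·t + x(s)·θ'(s)·x'(s)² = 0. Then x(s) = 0 for all s ∈ I. -/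
/-!
The identity is a quadratic polynomial in `t` vanishing for all `t > 0`, so its three coefficients
vanish. Where `x ≠ 0`, the constant coefficient `x θ' x'²` forces `x' = 0`; since `x` is continuous
this happens on an open set, so `x'' = 0` there as well, and the leading coefficient collapses to
`2 x θ'³ = 0`, which contradicts `x ≠ 0` and `θ' ≠ 0`.
-/

open Filter Topology

lemma coeffs_eq_zero_of_forall_pos_quadratic_eq_zero {A B C : ℝ}
    (h : ∀ t : ℝ, 0 < t → t ^ 2 * A + B * t + C = 0) : A = 0 ∧ B = 0 ∧ C = 0 := by
  have h1 := h 1 one_pos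
  have h2 := h 2 two_pos
  have h3 := h 3 three_pos
  refine ⟨?_, ?_, ?_⟩ <;> linarith

lemma deriv_deriv_eq_zero_of_deriv_eventuallyEq_zero {f : ℝ → ℝ} {s : ℝ}
    (h : deriv f =ᶠ[𝓝 s] fun _ => 0) : deriv (deriv f) s = 0 := by
  simpa using h.deriv_eq

theorem stmt_9_general (a b : ℝ) (x θ : ℝ → ℝ)
    (hx : ∀ s ∈ Set.Ioo a b, DifferentiableAt ℝ x s)
    (hθne : ∀ s ∈ Set.Ioo a b, deriv θ s ≠ 0)
    (heq : ∀ s ∈ Set.Ioo a b, ∀ t : ℝ, 0 < t →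
      t ^ 2 * (deriv x s * deriv (deriv θ) s - deriv θ s * deriv (deriv x) s
          + 2 * x s * (deriv θ s) ^ 3)
        + 2 * x s * deriv x s * (deriv θ s) ^ 2 * t
        + x s * deriv θ s * (deriv x s) ^ 2 = 0) :
    ∀ s ∈ Set.Ioo a b, x s = 0 := by
  have hcoef := fun s hs => coeffs_eq_zero_of_forall_pos_quadratic_eq_zero (heq s hs)
  have hdx : ∀ s ∈ Set.Ioo a b, x s ≠ 0 → deriv x s = 0 := fun s hs hxs => by
    simpa [hxs, hθne s hs] using (hcoef s hs).2.2
  intro s hs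
  by_contra hxs
  have hdx_near : deriv x =ᶠ[𝓝 s] fun _ => 0 := by
    filter_upwards [(hx s hs).continuousAt.eventually_ne hxs, isOpen_Ioo.mem_nhds hs]
      with r hxr hr
    exact hdx r hr hxr
  have hA := (hcoef s hs).1
  rw [hdx s hs hxs, deriv_deriv_eq_zero_of_deriv_eventuallyEq_zero hdx_near] at hA
  have hxθ : x s * deriv θ s ^ 3 = 0 := by linarith
  exact hxs (by simpa [hθne s hs] using hxθ)

/-- classification of 𝒜-invariant V-translators with `θ' ≠ 0`:
the polynomial identity in `t > 0` forces `x = 0` on the interval. -/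
theorem stmt_9 (a b : ℝ) (hab : a < b) (x θ : ℝ → ℝ)
    (hx : ∀ s ∈ Set.Ioo a b, DifferentiableAt ℝ x s)
    (hx' : ∀ s ∈ Set.Ioo a b, DifferentiableAt ℝ (deriv x) s)
    (hθ : ∀ s ∈ Set.Ioo a b, DifferentiableAt ℝ θ s)
    (hθ' : ∀ s ∈ Set.Ioo a b, DifferentiableAt ℝ (deriv θ) s)
    (hθne : ∀ s ∈ Set.Ioo a b, deriv θ s ≠ 0)
    (heq : ∀ s ∈ Set.Ioo a b, ∀ t : ℝ, 0 < t →
      t ^ 2 * (deriv x s * deriv (deriv θ) s - deriv θ s * deriv (deriv x) s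
          + 2 * x s * (deriv θ s) ^ 3)
        + 2 * x s * deriv x s * (deriv θ s) ^ 2 * t
        + x s * deriv θ s * (deriv x s) ^ 2 = 0) :
    ∀ s ∈ Set.Ioo a b, x s = 0 :=
  stmt_9_general a b x θ hx hθne heq
end

section
/- Let I ⊆ ℝ be a nontrivial open interval, H ∈ ℝ a constant, and φ, x, y : I → ℝ differentiable functions with y(s) > 0 for all s ∈ I, satisfying x'(s) = 2·y(s)·cos φ(s), y'(s) = 2·y(s)·sin φ(s), φ'(s) = 2·(H − cos φ(s)), and φ'(s) = −(y(s)·cos φ(s) + x(s)·sin φ(s))/y(s) for all s ∈ I. Then H = 0 and cos φ(s) = 0 for all s ∈ I. -/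
/-!
Comparing the two expressions for `φ'` gives `x sin φ = y (cos φ - 2H)`. Differentiating this
identity along the curve and eliminating `x` with it yields `(1 + 2H²) cos φ = 3H`, so `cos φ` is
a constant `c`. Then `φ' = 2(H - c)` is constant too, and a nonzero constant derivative is
incompatible with `cos φ` being constant; hence `cos φ ≡ H` and `H³ = H`, while `H = ±1`
would force `sin φ = 0` and then `H y = 0`.
-/

open Real Set

theorem HasDerivAt.unique_of_eqOn {𝕜 F : Type*} [NontriviallyNormedField 𝕜]
    [NormedAddCommGroup F] [NormedSpace 𝕜 F] {f g : 𝕜 → F} {f' g' : F} {U : Set 𝕜}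
    {s : 𝕜} (hU : IsOpen U) (hs : s ∈ U) (hf : HasDerivAt f f' s) (hg : HasDerivAt g g' s)
    (hfg : EqOn f g U) : f' = g' :=
  (hf.congr_of_eventuallyEq (hfg.eventuallyEq_of_mem (hU.mem_nhds hs)).symm).unique hg

theorem eq_zero_of_hasDerivAt_of_cos_comp_eq_const {U : Set ℝ} (hU : IsOpen U)
    (hne : U.Nonempty) {φ : ℝ → ℝ} {d c : ℝ} (hφ : ∀ s ∈ U, HasDerivAt φ d s)
    (hcos : ∀ s ∈ U, cos (φ s) = c) : d = 0 := by
  by_contra hd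
  have hsin : ∀ s ∈ U, sin (φ s) = 0 := fun s hs => by
    have h := (hφ s hs).cos.unique_of_eqOn hU hs (hasDerivAt_const s c) hcos
    simpa [hd] using h
  obtain ⟨s, hs⟩ := hne
  have h := (hφ s hs).sin.unique_of_eqOn hU hs (hasDerivAt_const s 0) hsin
  have hcos0 : cos (φ s) = 0 := by simpa [hd] using h
  have := sin_sq_add_cos_sq (φ s)
  simp [hsin s hs, hcos0] at this

section RotationalTranslator

variable {U : Set ℝ} {H : ℝ} {φ x y : ℝ → ℝ}

theorem x_mul_sin_eq_of_hasDerivAt {s : ℝ} (hy : 0 < y s)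
    (hdφ₁ : HasDerivAt φ (2 * (H - cos (φ s))) s)
    (hdφ₂ : HasDerivAt φ (-(y s * cos (φ s) + x s * sin (φ s)) / y s) s) :
    x s * sin (φ s) = y s * (cos (φ s) - 2 * H) := by
  have h := hdφ₁.unique hdφ₂
  field_simp at h
  linarith

theorem one_add_two_mul_sq_mul_cos_eq (hU : IsOpen U) (hpos : ∀ s ∈ U, 0 < y s)
    (hdx : ∀ s ∈ U, HasDerivAt x (2 * y s * cos (φ s)) s)
    (hdy : ∀ s ∈ U, HasDerivAt y (2 * y s * sin (φ s)) s)
    (hdφ : ∀ s ∈ U, HasDerivAt φ (2 * (H - cos (φ s))) s)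
    (hkey : ∀ s ∈ U, x s * sin (φ s) = y s * (cos (φ s) - 2 * H)) :
    ∀ s ∈ U, (1 + 2 * H ^ 2) * cos (φ s) = 3 * H := by
  intro s hs
  have hdiff : 2 * y s * cos (φ s) * sin (φ s) + x s * (cos (φ s) * (2 * (H - cos (φ s)))) =
      2 * y s * sin (φ s) * (cos (φ s) - 2 * H) +
        y s * (-sin (φ s) * (2 * (H - cos (φ s)))) :=
    ((hdx s hs).mul (hdφ s hs).sin).unique_of_eqOn hU hs
      ((hdy s hs).mul ((hdφ s hs).cos.sub_const (2 * H))) hkey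
  have hmul : 2 * y s * ((1 + 2 * H ^ 2) * cos (φ s) - 3 * H) = 0 := by
    linear_combination -sin (φ s) * hdiff + 2 * cos (φ s) * (H - cos (φ s)) * hkey s hs +
      2 * y s * (3 * H - cos (φ s)) * sin_sq_add_cos_sq (φ s)
  have hy : 2 * y s ≠ 0 := by linarith [hpos s hs]
  linarith [(mul_eq_zero.1 hmul).resolve_left hy]

theorem eq_zero_of_cos_eq {s : ℝ} (hy : 0 < y s) (hcos : cos (φ s) = H)
    (hH : (1 + 2 * H ^ 2) * H = 3 * H) (hkey : x s * sin (φ s) = y s * (cos (φ s) - 2 * H)) :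
    H = 0 := by
  have hcube : H * (H ^ 2 - 1) = 0 := by linear_combination hH / 2
  refine (mul_eq_zero.1 hcube).resolve_right fun hH2 => ?_
  have hsin : sin (φ s) = 0 := pow_eq_zero_iff two_ne_zero |>.1 <| by
    linear_combination sin_sq_add_cos_sq (φ s) - (cos (φ s) + H) * hcos - hH2
  rw [hsin, hcos] at hkey
  have hyH : y s * H = 0 := by linear_combination hkey
  have hH0 : H = 0 := (mul_eq_zero.1 hyH).resolve_left hy.ne'
  simp [hH0] at hH2

end RotationalTranslator

/-- a rotational V-translator with constant mean curvature `H`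
(i.e. `x' = 2 y cos φ`, `y' = 2 y sin φ`, `φ' = 2(H - cos φ)` and
`φ' = -(y cos φ + x sin φ)/y` with `y > 0`) satisfies `H = 0` and
`cos φ ≡ 0`. -/
theorem stmt_11 (a b : ℝ) (hab : a < b) (H : ℝ) (φ x y : ℝ → ℝ)
    (hpos : ∀ s ∈ Set.Ioo a b, 0 < y s)
    (hdx : ∀ s ∈ Set.Ioo a b, HasDerivAt x (2 * y s * Real.cos (φ s)) s)
    (hdy : ∀ s ∈ Set.Ioo a b, HasDerivAt y (2 * y s * Real.sin (φ s)) s)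
    (hdφ₁ : ∀ s ∈ Set.Ioo a b, HasDerivAt φ (2 * (H - Real.cos (φ s))) s)
    (hdφ₂ : ∀ s ∈ Set.Ioo a b,
      HasDerivAt φ (-(y s * Real.cos (φ s) + x s * Real.sin (φ s)) / y s) s) :
    H = 0 ∧ ∀ s ∈ Set.Ioo a b, Real.cos (φ s) = 0 := by
  have hkey : ∀ s ∈ Ioo a b, x s * sin (φ s) = y s * (cos (φ s) - 2 * H) := fun s hs =>
    x_mul_sin_eq_of_hasDerivAt (hpos s hs) (hdφ₁ s hs) (hdφ₂ s hs)
  have hne := nonempty_Ioo.2 hab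
  have hlin := one_add_two_mul_sq_mul_cos_eq isOpen_Ioo hpos hdx hdy hdφ₁ hkey
  set c := 3 * H / (1 + 2 * H ^ 2)
  have hcos : ∀ s ∈ Ioo a b, cos (φ s) = c := fun s hs => by
    rw [eq_div_iff (by positivity), mul_comm]
    exact hlin s hs
  have hcH : H = c := by
    have hd : ∀ s ∈ Ioo a b, HasDerivAt φ (2 * (H - c)) s := fun s hs => by
      simpa only [hcos s hs] using hdφ₁ s hs
    linarith [eq_zero_of_hasDerivAt_of_cos_comp_eq_const isOpen_Ioo hne hd hcos]
  obtain ⟨s₀, hs₀⟩ := hne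
  have hcos_H : ∀ s ∈ Ioo a b, cos (φ s) = H := fun s hs => hcH ▸ hcos s hs
  have hH : H = 0 := eq_zero_of_cos_eq (hpos s₀ hs₀) (hcos_H s₀ hs₀)
    (by simpa only [hcos_H s₀ hs₀] using hlin s₀ hs₀) (hkey s₀ hs₀)
  exact ⟨hH, fun s hs => (hcos_H s hs).trans hH⟩
end

section
/- Let I ⊆ ℝ be a nontrivial open interval and let x, θ : I → ℝ be twice differentiable functions such that for every s ∈ I and every real t > 0 one has 4·t²·(x'(s)·θ''(s) − x''(s)·θ'(s)) + (x(s)² − t²)·θ'(s)·(x'(s)² + (x'(s) + 2·t·θ'(s))²) = 0. Then θ is constant on I. -/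
/-! The left-hand side of the identity is a quartic polynomial in `t` whose `t⁴`-coefficient is
`-4 θ'³`. A quartic vanishing for all `t > 0` has zero leading coefficient, so `θ' = 0` on the
interval and `θ` is constant. -/

/-- The fourth finite difference of a quartic at `1, …, 5` is `24` times its leading coefficient. -/
theorem quartic_leading_coeff_eq_zero {c₀ c₁ c₂ c₃ c₄ : ℝ}
    (h : ∀ t : ℝ, 0 < t → c₄ * t ^ 4 + c₃ * t ^ 3 + c₂ * t ^ 2 + c₁ * t + c₀ = 0) : c₄ = 0 := by
  linear_combination (1 / 24 : ℝ) * (h 1 (by norm_num) - 4 * h 2 (by norm_num)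
    + 6 * h 3 (by norm_num) - 4 * h 4 (by norm_num) + h 5 (by norm_num))

theorem eq_zero_of_translator_identity {X p q A : ℝ}
    (h : ∀ t : ℝ, 0 < t → 4 * t ^ 2 * A + (X ^ 2 - t ^ 2) * q * (p ^ 2 + (p + 2 * t * q) ^ 2) = 0) :
    q = 0 := by
  have hcube : -4 * q ^ 3 = 0 :=
    quartic_leading_coeff_eq_zero (c₃ := -4 * p * q ^ 2) (c₂ := 4 * A - 2 * p ^ 2 * q + 4 * X ^ 2 * q ^ 3)
      (c₁ := 4 * X ^ 2 * p * q ^ 2) (c₀ := 2 * X ^ 2 * p ^ 2 * q)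
      fun t ht => by linear_combination h t ht
  simpa using hcube

theorem stmt_12_general (a b : ℝ) (x θ : ℝ → ℝ)
    (hθ : ∀ s ∈ Set.Ioo a b, DifferentiableAt ℝ θ s)
    (heq : ∀ s ∈ Set.Ioo a b, ∀ t : ℝ, 0 < t →
      4 * t ^ 2 * (deriv x s * deriv (deriv θ) s - deriv (deriv x) s * deriv θ s)
        + (x s ^ 2 - t ^ 2) * deriv θ s *
          ((deriv x s) ^ 2 + (deriv x s + 2 * t * deriv θ s) ^ 2) = 0) :
    ∀ s ∈ Set.Ioo a b, ∀ s' ∈ Set.Ioo a b, θ s = θ s' := by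
  intro s hs s' hs'
  exact isOpen_Ioo.is_const_of_deriv_eq_zero isPreconnected_Ioo
    (fun z hz => (hθ z hz).differentiableWithinAt)
    (fun z hz => eq_zero_of_translator_identity (heq z hz)) hs hs'

/-- classification of 𝒜-invariant W-translators: the polynomial
identity in `t > 0` forces `θ` to be constant on the interval. -/
theorem stmt_12 (a b : ℝ) (hab : a < b) (x θ : ℝ → ℝ)
    (hx : ∀ s ∈ Set.Ioo a b, DifferentiableAt ℝ x s)
    (hx' : ∀ s ∈ Set.Ioo a b, DifferentiableAt ℝ (deriv x) s)
    (hθ : ∀ s ∈ Set.Ioo a b, DifferentiableAt ℝ θ s)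
    (hθ' : ∀ s ∈ Set.Ioo a b, DifferentiableAt ℝ (deriv θ) s)
    (heq : ∀ s ∈ Set.Ioo a b, ∀ t : ℝ, 0 < t →
      4 * t ^ 2 * (deriv x s * deriv (deriv θ) s - deriv (deriv x) s * deriv θ s)
        + (x s ^ 2 - t ^ 2) * deriv θ s *
          ((deriv x s) ^ 2 + (deriv x s + 2 * t * deriv θ s) ^ 2) = 0) :
    ∀ s ∈ Set.Ioo a b, ∀ s' ∈ Set.Ioo a b, θ s = θ s' :=
  stmt_12_general a b x θ hθ heq
end

section
/- Let H be a real constant with 0 ≤ H < 1. Then the function φ(s) = −2·arctan((1 − H)·tanh(√(1 − H²)·s)/√(1 − H²)) satisfies φ'(s) = 2·H − 2·cos φ(s) for all s ∈ ℝ. -/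
/-!
Writing `φ = -2 arctan u`, the half-angle formula `cos φ = (1 - u²) / (1 + u²)` turns
`φ' = 2H - 2 cos φ` into the Riccati equation `u' = (1 - H) - (1 + H) u²`. Its solution with
`u 0 = 0` is `u s = (1 - H) tanh (a s) / a`, where `a² = (1 - H)(1 + H)`, because
`tanh' = 1 - tanh²`.
-/

open Real

namespace Real

theorem hasDerivAt_tanh_s13 (x : ℝ) : HasDerivAt tanh (1 - tanh x ^ 2) x := by
  have hcosh : cosh x ≠ 0 := (cosh_pos x).ne'
  have hquot := (hasDerivAt_sinh x).div (hasDerivAt_cosh x) hcosh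
  have htanh : sinh / cosh = tanh := funext fun y => (tanh_eq_sinh_div_cosh y).symm
  rw [htanh] at hquot
  refine hquot.congr_deriv ?_
  rw [tanh_eq_sinh_div_cosh]
  field_simp

theorem cos_two_mul_arctan_s13 (x : ℝ) : cos (2 * arctan x) = (1 - x ^ 2) / (1 + x ^ 2) := by
  rw [cos_two_mul, cos_sq_arctan]
  field_simp
  ring

end Real

theorem hasDerivAt_mul_tanh_div_of_sq_eq {c d a : ℝ} (ha : a ≠ 0) (had : a ^ 2 = c * d) (s : ℝ) :
    HasDerivAt (fun s => c * tanh (a * s) / a) (c - d * (c * tanh (a * s) / a) ^ 2) s := by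
  have hlin : HasDerivAt (fun s => a * s) a s := by simpa using (hasDerivAt_id s).const_mul a
  have hu := (((hasDerivAt_tanh_s13 (a * s)).comp s hlin).const_mul c).div_const a
  refine hu.congr_deriv ?_
  field_simp
  linear_combination -c * tanh (a * s) ^ 2 * had

theorem hasDerivAt_neg_two_mul_arctan_of_riccati {u : ℝ → ℝ} {H s : ℝ}
    (hu : HasDerivAt u ((1 - H) - (1 + H) * u s ^ 2) s) :
    HasDerivAt (fun s => -2 * arctan (u s)) (2 * H - 2 * cos (-2 * arctan (u s))) s := by
  refine (((hasDerivAt_arctan (u s)).comp s hu).const_mul (-2)).congr_deriv ?_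
  rw [neg_mul 2 (arctan (u s)), cos_neg, cos_two_mul_arctan_s13]
  field_simp
  ring

/-- for `0 ≤ H < 1`, the function
`φ(s) = -2 arctan((1-H) tanh(√(1-H²) s) / √(1-H²))` solves
`φ' = 2H - 2 cos φ` on all of `ℝ`. -/
theorem stmt_13 (H : ℝ) (h0 : 0 ≤ H) (h1 : H < 1) (φ : ℝ → ℝ)
    (hφ : φ = fun s => -2 * Real.arctan
      ((1 - H) * Real.tanh (Real.sqrt (1 - H ^ 2) * s) / Real.sqrt (1 - H ^ 2))) :
    ∀ s : ℝ, HasDerivAt φ (2 * H - 2 * Real.cos (φ s)) s := by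
  have hpos : 0 < 1 - H ^ 2 := by nlinarith
  have hsqrt_ne : √(1 - H ^ 2) ≠ 0 := (sqrt_pos.2 hpos).ne'
  have hsqrt_sq : √(1 - H ^ 2) ^ 2 = (1 - H) * (1 + H) := by rw [sq_sqrt hpos.le]; ring
  subst hφ
  intro s
  exact hasDerivAt_neg_two_mul_arctan_of_riccati
    (hasDerivAt_mul_tanh_div_of_sq_eq hsqrt_ne hsqrt_sq s)
end

section
/- There do not exist a nontrivial open interval I ⊆ ℝ, a real constant H, and differentiable functions φ, x, y : I → ℝ with y(s) > 0 for all s ∈ I, satisfying simultaneously x'(s) = 2·y(s)·cos φ(s), y'(s) = 2·y(s)·sin φ(s), φ'(s) = 2·(H − cos φ(s)), and φ'(s)/2 + cos φ(s) = ((y(s)² − x(s)²)/(4·y(s)))·sin φ(s) + (x(s)/2)·cos φ(s) for all s ∈ I. -/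
/-!
Let `rotRe + i rotIm = -(x - i y)² e^{iφ}`. The translator equation says `rotIm = 4 H y`, and
differentiating it along the curve gives `x² + y² + H rotRe = 0`; in particular `H ≠ 0`.
Eliminating `φ` through `rotRe² + rotIm² = (x² + y²)²` leaves `K² (H² - 1) = H⁴` for
`K = (x² + y²) / (4 y)`. But `K' = rotIm / (2 y) = 2 H ≠ 0`, and a nonconstant `K` can only satisfy
this equation if `H² = 1`, which then forces `H⁴ = 0`.
-/

open Real Set

theorem HasDerivAt.eq_zero_of_eqOn_const {𝕜 F : Type*} [NontriviallyNormedField 𝕜]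
    [NormedAddCommGroup F] [NormedSpace 𝕜 F] {f : 𝕜 → F} {f' c : F} {s : 𝕜} {U : Set 𝕜}
    (hf : HasDerivAt f f' s) (hU : IsOpen U) (hs : s ∈ U) (hc : EqOn f (fun _ => c) U) :
    f' = 0 :=
  hf.unique <| (hasDerivAt_const s c).congr_of_eventuallyEq <|
    Filter.eventuallyEq_of_mem (hU.mem_nhds hs) hc

noncomputable def rotRe (x y θ : ℝ) : ℝ := (y ^ 2 - x ^ 2) * cos θ - 2 * x * y * sin θ

noncomputable def rotIm (x y θ : ℝ) : ℝ := (y ^ 2 - x ^ 2) * sin θ + 2 * x * y * cos θ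

theorem rotRe_sq_add_rotIm_sq (x y θ : ℝ) :
    rotRe x y θ ^ 2 + rotIm x y θ ^ 2 = (x ^ 2 + y ^ 2) ^ 2 := by
  unfold rotRe rotIm
  linear_combination (x ^ 2 + y ^ 2) ^ 2 * sin_sq_add_cos_sq θ

theorem cos_mul_rotRe_add_sin_mul_rotIm (x y θ : ℝ) :
    cos θ * rotRe x y θ + sin θ * rotIm x y θ = y ^ 2 - x ^ 2 := by
  unfold rotRe rotIm
  linear_combination (y ^ 2 - x ^ 2) * sin_sq_add_cos_sq θ

theorem rotIm_eq_of_div_mul_sin_add_eq {x y θ H : ℝ} (hy : y ≠ 0)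
    (h : (y ^ 2 - x ^ 2) / (4 * y) * sin θ + x / 2 * cos θ = H) :
    rotIm x y θ = 4 * H * y := by
  rw [← h, rotIm]
  field_simp
  ring

section Derivatives

variable {x y φ : ℝ → ℝ} {s : ℝ}

theorem hasDerivAt_rotIm {φ' : ℝ} (hx : HasDerivAt x (2 * y s * cos (φ s)) s)
    (hy : HasDerivAt y (2 * y s * sin (φ s)) s) (hφ : HasDerivAt φ φ' s) :
    HasDerivAt (fun t => rotIm (x t) (y t) (φ t))
      (4 * y s ^ 2 + φ' * rotRe (x s) (y s) (φ s)) s := by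
  refine ((((hy.fun_pow 2).fun_sub (hx.fun_pow 2)).fun_mul hφ.sin).fun_add
    (((hx.const_mul 2).fun_mul hy).fun_mul hφ.cos)).congr_deriv ?_
  unfold rotRe
  push_cast
  linear_combination 4 * y s ^ 2 * sin_sq_add_cos_sq (φ s)

theorem hasDerivAt_sq_add_sq_div (hx : HasDerivAt x (2 * y s * cos (φ s)) s)
    (hy : HasDerivAt y (2 * y s * sin (φ s)) s) (hys : y s ≠ 0) :
    HasDerivAt (fun t => (x t ^ 2 + y t ^ 2) / (4 * y t))
      (rotIm (x s) (y s) (φ s) / (2 * y s)) s := by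
  refine (((hx.fun_pow 2).fun_add (hy.fun_pow 2)).fun_div (hy.const_mul 4)
    (by positivity)).congr_deriv ?_
  unfold rotIm
  push_cast
  field_simp
  ring

theorem sq_add_sq_add_mul_rotRe_eq_zero {H : ℝ} {U : Set ℝ} (hU : IsOpen U) (hs : s ∈ U)
    (hx : HasDerivAt x (2 * y s * cos (φ s)) s) (hy : HasDerivAt y (2 * y s * sin (φ s)) s)
    (hφ : HasDerivAt φ (2 * (H - cos (φ s))) s)
    (hIm : ∀ t ∈ U, rotIm (x t) (y t) (φ t) = 4 * H * y t) :
    x s ^ 2 + y s ^ 2 + H * rotRe (x s) (y s) (φ s) = 0 := by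
  have h := ((hasDerivAt_rotIm hx hy hφ).sub (hy.const_mul (4 * H))).eq_zero_of_eqOn_const
    hU hs (c := 0) fun t ht => sub_eq_zero.mpr (hIm t ht)
  linear_combination
    h / 2 - sin (φ s) * hIm s hs + cos_mul_rotRe_add_sin_mul_rotIm (x s) (y s) (φ s)

end Derivatives

theorem sq_div_mul_sq_sub_one_eq {x y θ H : ℝ} (hy : y ≠ 0) (hIm : rotIm x y θ = 4 * H * y)
    (hRe : x ^ 2 + y ^ 2 + H * rotRe x y θ = 0) :
    ((x ^ 2 + y ^ 2) / (4 * y)) ^ 2 * (H ^ 2 - 1) = H ^ 4 := by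
  field_simp
  linear_combination (H * rotRe x y θ - (x ^ 2 + y ^ 2)) * hRe
    + H ^ 2 * (rotIm x y θ + 4 * H * y) * hIm - H ^ 2 * rotRe_sq_add_rotIm_sq x y θ

/-- there are no rotational W-translators with constant mean
curvature: no nontrivial open interval carries differentiable `φ, x, y` with
`y > 0` satisfying `x' = 2 y cos φ`, `y' = 2 y sin φ`, `φ' = 2(H - cos φ)` and
`φ'/2 + cos φ = ((y² - x²)/(4y)) sin φ + (x/2) cos φ`. -/
theorem stmt_16 :
    ¬ ∃ (a b : ℝ) (_ : a < b) (H : ℝ) (φ x y : ℝ → ℝ),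
      (∀ s ∈ Set.Ioo a b, 0 < y s) ∧
      (∀ s ∈ Set.Ioo a b, HasDerivAt x (2 * y s * Real.cos (φ s)) s) ∧
      (∀ s ∈ Set.Ioo a b, HasDerivAt y (2 * y s * Real.sin (φ s)) s) ∧
      (∀ s ∈ Set.Ioo a b, HasDerivAt φ (2 * (H - Real.cos (φ s))) s) ∧
      (∀ s ∈ Set.Ioo a b,
        deriv φ s / 2 + Real.cos (φ s) =
          (y s ^ 2 - x s ^ 2) / (4 * y s) * Real.sin (φ s)
            + x s / 2 * Real.cos (φ s)) := by
  rintro ⟨a, b, hab, H, φ, x, y, hy0, hx, hy, hφ, heq⟩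
  have hIm : ∀ s ∈ Ioo a b, rotIm (x s) (y s) (φ s) = 4 * H * y s := fun s hs =>
    rotIm_eq_of_div_mul_sin_add_eq (hy0 s hs).ne' (by linarith [heq s hs, (hφ s hs).deriv])
  have hRe : ∀ s ∈ Ioo a b, x s ^ 2 + y s ^ 2 + H * rotRe (x s) (y s) (φ s) = 0 := fun s hs =>
    sq_add_sq_add_mul_rotRe_eq_zero isOpen_Ioo hs (hx s hs) (hy s hs) (hφ s hs) hIm
  set K := fun t => (x t ^ 2 + y t ^ 2) / (4 * y t)
  have hKsq : ∀ s ∈ Ioo a b, K s ^ 2 * (H ^ 2 - 1) = H ^ 4 := fun s hs =>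
    sq_div_mul_sq_sub_one_eq (hy0 s hs).ne' (hIm s hs) (hRe s hs)
  obtain ⟨s, hs⟩ := nonempty_Ioo.mpr hab
  have hK : HasDerivAt K (2 * H) s := by
    convert hasDerivAt_sq_add_sq_div (hx s hs) (hy s hs) (hy0 s hs).ne' using 1
    rw [hIm s hs]
    field_simp [(hy0 s hs).ne']
    ring
  have hH : H ≠ 0 := by
    rintro rfl
    nlinarith [hRe s hs, hy0 s hs]
  have hKpos : 0 < K s := by have := hy0 s hs; positivity
  have hK' := ((hK.pow 2).mul_const (H ^ 2 - 1)).eq_zero_of_eqOn_const isOpen_Ioo hs hKsq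
  have hH1 : H ^ 2 - 1 = 0 := by simpa [hH, hKpos.ne'] using hK'
  exact hH (by simpa [hH1] using (hKsq s hs).symm)
end
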